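/- arXiv:1806.03634 — 6 statements merged into one kernel-verified Lean document; each statement's English description precedes it below -/
import Mathlib

section
/- The multiset of eigenvalues of the Hermitian adjacency matrix of the mixed cycle C_n^1 (the n-cycle with exactly one directed edge, all other edges undirected) is {2·cos((2k+1)π/(2n)) : k = 0, 1, …, n−1}. -/
/-!
Write `C1mat n = S + Sᴴ`, where `S` is the cyclic shift whose wrap-around entry is `i`. If
`x ^ n = i`, the geometric vector `(x ^ j)_j` satisfies `S v = x v` and `Sᴴ v = x⁻¹ v`, so it is an
eigenvector with eigenvalue `x + x⁻¹`. Taking `x = e^{±iψ_k}` with `ψ_k = (2k+1)π/(2n)` yields the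
`n` eigenvalues `2 cos ψ_k`, which are distinct because `0 < ψ_k < π`; hence they are all the roots
of the characteristic polynomial, each simple.
-/

/-- The Hermitian adjacency matrix of the mixed cycle `C_n^1`: the `n`-cycle with
all edges undirected except one directed edge from `v_n` to `v_1`. -/
def C1mat (n : ℕ) : Matrix (Fin n) (Fin n) ℂ :=
  Matrix.of fun i j =>
    if (i : ℕ) = n - 1 ∧ (j : ℕ) = 0 then Complex.I
    else if (i : ℕ) = 0 ∧ (j : ℕ) = n - 1 then -Complex.I
    else if (i : ℕ) + 1 = (j : ℕ) ∨ (j : ℕ) + 1 = (i : ℕ) then 1 else 0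

open Polynomial Matrix Finset

theorem Matrix.isRoot_charpoly_of_mulVec_eq_smul {K n : Type*} [Field K] [Fintype n]
    [DecidableEq n] {M : Matrix n n K} {v : n → K} {μ : K} (hv : v ≠ 0)
    (h : M *ᵥ v = μ • v) : M.charpoly.IsRoot μ := by
  rw [IsRoot, eval_charpoly, ← exists_mulVec_eq_zero_iff]
  exact ⟨v, hv, by rw [sub_mulVec, h, sub_eq_zero]; ext; simp [mulVec_diagonal]⟩

def twistedShift {R : Type*} [Semiring R] (n : ℕ) (c : R) : Matrix (Fin n) (Fin n) R :=
  of fun i j => if (i : ℕ) + 1 = j then 1 else if (i : ℕ) = n - 1 ∧ (j : ℕ) = 0 then c else 0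

def geomVec {R : Type*} [Monoid R] (n : ℕ) (x : R) : Fin n → R := fun j => x ^ (j : ℕ)

theorem twistedShift_mulVec_geomVec {R : Type*} [CommSemiring R] {n : ℕ} {c x : R}
    (hx : x ^ n = c) : twistedShift n c *ᵥ (geomVec n x) = x • geomVec n x := by
  ext i
  simp only [mulVec, dotProduct, twistedShift, geomVec, of_apply, Pi.smul_apply, smul_eq_mul]
  by_cases hi : (i : ℕ) + 1 < n
  · rw [Finset.sum_eq_single ⟨i + 1, hi⟩]
    · simp [pow_succ']
    · intro j _ hj
      rw [if_neg (fun h => hj (Fin.ext h.symm)), if_neg (by omega), zero_mul]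
    · simp
  · rw [Finset.sum_eq_single ⟨0, by omega⟩]
    · rw [if_neg (by simp), if_pos ⟨by omega, rfl⟩, Fin.val_mk, pow_zero, mul_one, ← hx,
        ← pow_succ', show (i : ℕ) + 1 = n by omega]
    · intro j _ hj
      rw [if_neg (by omega), if_neg (fun h => hj (Fin.ext h.2)), zero_mul]
    · simp

theorem conjTranspose_twistedShift_mulVec_geomVec {K : Type*} [Field K] [StarRing K] {n : ℕ}
    (hn : n ≠ 0) {c x : K} (hc : star c * c = 1) (hx : x ^ n = c) :
    (twistedShift n c)ᴴ *ᵥ (geomVec n x) = x⁻¹ • geomVec n x := by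
  have hx0 : x ≠ 0 := by rintro rfl; simp [zero_pow hn] at hx; simp [← hx] at hc
  ext i
  simp only [mulVec, dotProduct, conjTranspose_apply, twistedShift, geomVec, of_apply,
    Pi.smul_apply, smul_eq_mul]
  by_cases hi : (i : ℕ) = 0
  · rw [Finset.sum_eq_single ⟨n - 1, by omega⟩]
    · rw [if_neg (by omega), if_pos ⟨rfl, hi⟩, hi, pow_zero, mul_one]
      apply eq_inv_of_mul_eq_one_left
      rw [Fin.val_mk, mul_assoc, ← pow_succ, Nat.sub_add_cancel (by omega), hx, hc]
    · intro j _ hj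
      rw [if_neg (by omega), if_neg (fun h => hj (Fin.ext h.1)), star_zero, zero_mul]
    · simp
  · rw [Finset.sum_eq_single ⟨i - 1, by omega⟩]
    · rw [if_pos (by rw [Fin.val_mk]; omega), star_one, one_mul, eq_inv_mul_iff_mul_eq₀ hx0,
        Fin.val_mk, ← pow_succ', Nat.sub_add_cancel (by omega)]
    · intro j _ hj
      have hj' : (j : ℕ) + 1 ≠ i := fun h => hj (Fin.ext (by dsimp only; omega))
      rw [if_neg hj', if_neg (by omega), star_zero, zero_mul]
    · simp

theorem C1mat_eq_twistedShift_add_conjTranspose {n : ℕ} (hn : 3 ≤ n) :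
    C1mat n = twistedShift n Complex.I + (twistedShift n Complex.I)ᴴ := by
  ext i j
  simp only [C1mat, twistedShift, of_apply, Matrix.add_apply, conjTranspose_apply]
  have := i.isLt; have := j.isLt
  split_ifs <;> first | omega | simp

theorem C1mat_mulVec_geomVec {n : ℕ} (hn : 3 ≤ n) {x : ℂ} (hx : x ^ n = Complex.I) :
    C1mat n *ᵥ geomVec n x = (x + x⁻¹) • geomVec n x := by
  rw [C1mat_eq_twistedShift_add_conjTranspose hn, add_mulVec, twistedShift_mulVec_geomVec hx,
    conjTranspose_twistedShift_mulVec_geomVec (by omega) (by simp) hx, add_smul]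

theorem exists_pow_eq_I_add_inv_eq_two_cos {n : ℕ} (hn : n ≠ 0) (k : ℕ) :
    ∃ x : ℂ, x ^ n = Complex.I ∧
      x + x⁻¹ = (2 * Real.cos ((2 * k + 1) * Real.pi / (2 * n)) : ℝ) := by
  generalize hθ : (2 * k + 1) * Real.pi / (2 * n) = θ
  have hnθ : (n : ℂ) * θ = (2 * k + 1 : ℕ) * (Real.pi / 2 : ℂ) := by
    rw [← hθ]; push_cast; field_simp
  set y := Complex.exp (θ * Complex.I)
  have hy : y ^ n = Complex.I * (-1) ^ k := by
    rw [← Complex.exp_nat_mul, ← mul_assoc, hnθ, mul_assoc, Complex.exp_nat_mul,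
      Complex.exp_pi_div_two_mul_I, pow_succ, pow_mul, Complex.I_sq, mul_comm]
  have hcos : y + y⁻¹ = (2 * Real.cos θ : ℝ) := by
    rw [← Complex.exp_neg, Complex.ofReal_mul, Complex.ofReal_ofNat, Complex.ofReal_cos,
      Complex.two_cos, neg_mul]
  rcases Nat.even_or_odd k with hk | hk
  · exact ⟨y, by rw [hy, hk.neg_one_pow, mul_one], hcos⟩
  · exact ⟨y⁻¹, by rw [inv_pow, hy, hk.neg_one_pow, mul_neg_one, inv_neg, Complex.inv_I, neg_neg],
      by rw [inv_inv, add_comm, hcos]⟩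

theorem injOn_cos_odd_mul_pi_div (n : ℕ) :
    Set.InjOn (fun k : ℕ => Real.cos ((2 * k + 1) * Real.pi / (2 * n))) (range n) := by
  have hangle : ∀ k ∈ range n, (2 * k + 1) * Real.pi / (2 * n) ∈ Set.Icc 0 Real.pi := by
    intro k hk
    have hk : (k : ℝ) + 1 ≤ n := by exact_mod_cast Finset.mem_range.mp hk
    constructor
    · positivity
    · rw [div_le_iff₀ (by linarith)]; nlinarith [Real.pi_pos]
  intro k hk l hl h
  have := Real.injOn_cos (hangle k hk) (hangle l hl) h
  have hn : (0 : ℝ) < n := by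
    have := Finset.mem_range.mp hk; exact_mod_cast (by omega : 0 < n)
  field_simp at this
  exact_mod_cast (by linarith : (k : ℝ) = l)

/-- The Hermitian spectrum of `C_n^1` is `{2 cos((2k+1)π/(2n)) : k = 0,…,n−1}`. -/
theorem spectrum_C1 (n : ℕ) (hn : 3 ≤ n) (hH : (C1mat n).IsHermitian) :
    Multiset.map hH.eigenvalues Finset.univ.val =
      (Finset.range n).val.map
        (fun k => 2 * Real.cos ((2 * k + 1) * Real.pi / (2 * n))) := by
  set μ : ℕ → ℂ := fun k => (2 * Real.cos ((2 * k + 1) * Real.pi / (2 * n)) : ℝ)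
  have hroot : ∀ k ∈ range n, (C1mat n).charpoly.IsRoot (μ k) := fun k _ => by
    obtain ⟨x, hxn, hxμ⟩ := exists_pow_eq_I_add_inv_eq_two_cos (by omega : n ≠ 0) k
    refine isRoot_charpoly_of_mulVec_eq_smul (v := geomVec n x) (fun h => ?_) ?_
    · simpa [geomVec] using congr_fun h ⟨0, by omega⟩
    · rw [C1mat_mulVec_geomVec hn hxn, hxμ]
  have hinj : Set.InjOn μ (range n) :=
    Complex.ofReal_injective.comp_injOn ((mul_right_injective₀ two_ne_zero).comp_injOn
      (injOn_cos_odd_mul_pi_div n))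
  have hroots : (C1mat n).charpoly.roots = (range n).val.map μ := by
    rw [← image_val_of_injOn hinj]
    refine roots_eq_of_natDegree_le_card_of_ne_zero (by simpa using hroot) ?_
      (charpoly_monic _).ne_zero
    simp [card_image_of_injOn hinj]
  rw [hH.roots_charpoly_eq_eigenvalues] at hroots
  apply Multiset.map_injective Complex.ofReal_injective
  -- in the statement `k` is real: `(range n).val` is coerced to a multiset of reals
  convert hroots using 1
  · rw [Multiset.map_map]; rfl
  · simp [Multiset.map_map, μ]
end

section
/- For every integer n ≥ 3, the characteristic polynomial of the signed cycle (C_{2n}, −) equals the square of the characteristic polynomial of the mixed cycle C_n^1: φ((C_{2n},−), λ) = (φ(C_n^1, λ))². -/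
open Polynomial Matrix

/-- The signed adjacency matrix of `(C_n, −)` (one negative edge), over `ℂ`. -/
def signedCycleMatC (n : ℕ) : Matrix (Fin n) (Fin n) ℂ :=
  Matrix.of fun i j =>
    if ((i : ℕ) = n - 1 ∧ (j : ℕ) = 0) ∨ ((i : ℕ) = 0 ∧ (j : ℕ) = n - 1) then -1
    else if (i : ℕ) + 1 = (j : ℕ) ∨ (j : ℕ) + 1 = (i : ℕ) then 1 else 0

/-- Generic cycle matrix with corner weights `w`, `w'`. -/
def genMat (N : ℕ) (w w' : ℂ) : Matrix (Fin N) (Fin N) ℂ :=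
  Matrix.of fun i j =>
    if (i : ℕ) = N - 1 ∧ (j : ℕ) = 0 then w
    else if (i : ℕ) = 0 ∧ (j : ℕ) = N - 1 then w'
    else if (i : ℕ) + 1 = (j : ℕ) ∨ (j : ℕ) + 1 = (i : ℕ) then 1 else 0

lemma signed_eq_gen (N : ℕ) : signedCycleMatC N = genMat N (-1) (-1) := by
  ext i j
  simp only [signedCycleMatC, genMat, Matrix.of_apply]
  split_ifs <;> first | rfl | tauto

lemma C1_eq_gen (n : ℕ) : C1mat n = genMat n Complex.I (-Complex.I) := by
  rfl

lemma charpoly_eq_of_conj {N : ℕ} (A B P : Matrix (Fin N) (Fin N) ℂ)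
    (hP : P.det ≠ 0) (h : A * P = P * B) : A.charpoly = B.charpoly := by
  have hmap : charmatrix A * (Polynomial.C : ℂ →+* ℂ[X]).mapMatrix P
      = (Polynomial.C : ℂ →+* ℂ[X]).mapMatrix P * charmatrix B := by
    have hcomm : ∀ M : Matrix (Fin N) (Fin N) ℂ[X],
        Matrix.scalar (Fin N) (X : ℂ[X]) * M = M * Matrix.scalar (Fin N) (X : ℂ[X]) := by
      intro M
      exact (Matrix.scalar_commute (X : ℂ[X]) (fun r' => Commute.all _ _) M).eq
    show (Matrix.scalar (Fin N) (X : ℂ[X]) - _) * _ = _ * (Matrix.scalar (Fin N) (X : ℂ[X]) - _)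
    rw [sub_mul, mul_sub, hcomm, ← _root_.map_mul
      (Polynomial.C : ℂ →+* ℂ[X]).mapMatrix, ← _root_.map_mul
      (Polynomial.C : ℂ →+* ℂ[X]).mapMatrix, h]
  have hdet := congrArg Matrix.det hmap
  rw [det_mul, det_mul, ← RingHom.map_det] at hdet
  have hC : (Polynomial.C (P.det)) ≠ 0 := by simpa using hP
  calc A.charpoly = A.charmatrix.det := rfl
    _ = B.charmatrix.det := by
        apply mul_right_cancel₀ hC
        rw [hdet, mul_comm]
    _ = B.charpoly := rfl

lemma charpoly_diagonal' {N : ℕ} (d : Fin N → ℂ) :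
    (Matrix.diagonal d).charpoly = ∏ k : Fin N, (X - C (d k)) := by
  have : charmatrix (Matrix.diagonal d) = Matrix.diagonal (fun k => X - C (d k)) := by
    ext i j
    by_cases hij : i = j
    · subst hij; simp [charmatrix_apply_eq]
    · simp [charmatrix_apply_ne _ _ _ hij, Matrix.diagonal_apply_ne _ hij]
  show (charmatrix _).det = _
  rw [this, det_diagonal]

lemma charpoly_of_eigen {N : ℕ} (M : Matrix (Fin N) (Fin N) ℂ) (x lam : Fin N → ℂ)
    (hx : Function.Injective x)
    (h : M * (Matrix.vandermonde x)ᵀ = (Matrix.vandermonde x)ᵀ * Matrix.diagonal lam) :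
    M.charpoly = ∏ k : Fin N, (X - C (lam k)) := by
  have hdet : ((Matrix.vandermonde x)ᵀ).det ≠ 0 := by
    rw [Matrix.det_transpose, Matrix.det_vandermonde]
    rw [Finset.prod_ne_zero_iff]
    intro i _
    rw [Finset.prod_ne_zero_iff]
    intro j hj
    have : i ≠ j := by
      intro e; subst e; simp [Finset.mem_Ioi] at hj
    exact sub_ne_zero_of_ne (fun e => this (hx e.symm))
  rw [charpoly_eq_of_conj M (Matrix.diagonal lam) _ hdet h, charpoly_diagonal']

lemma cycle_eigen {N : ℕ} (hN : 3 ≤ N) (w w' x : ℂ) (hx : x ≠ 0)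
    (hxN : x ^ N = w) (hww' : w' * w = 1) (j : Fin N) :
    ∑ l : Fin N, genMat N w w' j l * x ^ (l : ℕ) = (x + x⁻¹) * x ^ (j : ℕ) := by
  have hxinv : ∀ m : ℕ, 1 ≤ m → x⁻¹ * x ^ m = x ^ (m - 1) := by
    intro m hm
    have : x ^ m = x * x ^ (m - 1) := by
      conv_lhs => rw [show m = (m-1) + 1 by omega]
      ring
    rw [this]; field_simp
  rcases lt_trichotomy (j : ℕ) 0 with h0 | h0 | h0
  · omega
  · -- j = 0
    rw [Finset.sum_eq_add (⟨1, by omega⟩ : Fin N) (⟨N - 1, by omega⟩ : Fin N)]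
    · have e1 : genMat N w w' j ⟨1, by omega⟩ = 1 := by
        simp only [genMat, Matrix.of_apply, Fin.val_mk]
        rw [if_neg (by first | omega | tauto), if_neg (by first | omega | tauto),
          if_pos (by first | omega | tauto)]
      have e2 : genMat N w w' j ⟨N - 1, by omega⟩ = w' := by
        simp only [genMat, Matrix.of_apply, Fin.val_mk]
        rw [if_neg (by first | omega | tauto), if_pos (by first | omega | tauto)]
      rw [e1, e2, h0]
      have key : w' * x ^ (N - 1) * x = 1 := by
        rw [mul_assoc, ← pow_succ, show N - 1 + 1 = N by omega, hxN, hww']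
      have hkey : w' * x ^ (N - 1) = x⁻¹ := eq_inv_of_mul_eq_one_left key
      simp only [Fin.val_mk, pow_one, pow_zero, one_mul, mul_one]
      rw [hkey]
    · intro he
      have := congrArg Fin.val he
      simp only [Fin.val_mk] at this; omega
    · intro c _ hc
      obtain ⟨hc1, hc2⟩ := hc
      have hc1' : (c : ℕ) ≠ 1 := fun e => hc1 (Fin.ext (by simpa using e))
      have hc2' : (c : ℕ) ≠ N - 1 := fun e => hc2 (Fin.ext (by simpa using e))
      have := c.isLt
      simp only [genMat, Matrix.of_apply]
      rw [if_neg (by omega), if_neg (by omega), if_neg (by omega), zero_mul]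
    · intro hc; exact absurd (Finset.mem_univ _) hc
    · intro hc; exact absurd (Finset.mem_univ _) hc
  · rcases lt_trichotomy (j : ℕ) (N - 1) with h1 | h1 | h1
    · -- interior
      rw [Finset.sum_eq_add (⟨(j:ℕ) - 1, by omega⟩ : Fin N) (⟨(j:ℕ) + 1, by omega⟩ : Fin N)]
      · have e1 : genMat N w w' j ⟨(j:ℕ) - 1, by omega⟩ = 1 := by
          simp only [genMat, Matrix.of_apply, Fin.val_mk]
          rw [if_neg (by first | omega | tauto), if_neg (by first | omega | tauto),
            if_pos (by first | omega | tauto | (right; omega))]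
        have e2 : genMat N w w' j ⟨(j:ℕ) + 1, by omega⟩ = 1 := by
          simp only [genMat, Matrix.of_apply, Fin.val_mk]
          rw [if_neg (by first | omega | tauto), if_neg (by first | omega | tauto),
            if_pos (by first | omega | tauto | (left; omega))]
        rw [e1, e2]
        have hdown := hxinv (j : ℕ) (by omega)
        simp only [Fin.val_mk, one_mul]
        rw [add_mul, hdown, ← pow_succ']
        ring
      · intro he
        have := congrArg Fin.val he
        simp only [Fin.val_mk] at this; omega
      · intro c _ hc
        obtain ⟨hc1, hc2⟩ := hc
        have hc1' : (c : ℕ) ≠ (j:ℕ) - 1 := fun e => hc1 (Fin.ext (by simpa using e))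
        have hc2' : (c : ℕ) ≠ (j:ℕ) + 1 := fun e => hc2 (Fin.ext (by simpa using e))
        have := c.isLt
        simp only [genMat, Matrix.of_apply]
        rw [if_neg (by omega), if_neg (by omega), if_neg (by omega), zero_mul]
      · intro hc; exact absurd (Finset.mem_univ _) hc
      · intro hc; exact absurd (Finset.mem_univ _) hc
    · -- j = N - 1
      rw [Finset.sum_eq_add (⟨N - 2, by omega⟩ : Fin N) (⟨0, by omega⟩ : Fin N)]
      · have e1 : genMat N w w' j ⟨N - 2, by omega⟩ = 1 := by
          simp only [genMat, Matrix.of_apply, Fin.val_mk]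
          rw [if_neg (by first | omega | tauto), if_neg (by first | omega | tauto),
            if_pos (by first | omega | tauto | (right; omega))]
        have e2 : genMat N w w' j ⟨0, by omega⟩ = w := by
          simp only [genMat, Matrix.of_apply, Fin.val_mk]
          rw [if_pos (by first | omega | tauto | exact ⟨by omega, by omega⟩)]
        rw [e1, e2, h1]
        have h2 : x⁻¹ * x ^ (N - 1) = x ^ (N - 2) := by
          rw [hxinv (N - 1) (by omega)]; congr 1
        have h3 : x * x ^ (N - 1) = w := by
          rw [← pow_succ', show N - 1 + 1 = N by omega, hxN]
        simp only [Fin.val_mk, one_mul, pow_zero, mul_one]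
        rw [add_mul, h2, h3, add_comm]
      · intro he
        have := congrArg Fin.val he
        simp only [Fin.val_mk] at this; omega
      · intro c _ hc
        obtain ⟨hc1, hc2⟩ := hc
        have hc1' : (c : ℕ) ≠ N - 2 := fun e => hc1 (Fin.ext (by simpa using e))
        have hc2' : (c : ℕ) ≠ 0 := fun e => hc2 (Fin.ext (by simpa using e))
        have := c.isLt
        simp only [genMat, Matrix.of_apply]
        rw [if_neg (by omega), if_neg (by omega), if_neg (by omega), zero_mul]
      · intro hc; exact absurd (Finset.mem_univ _) hc
      · intro hc; exact absurd (Finset.mem_univ _) hc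
    · have := j.isLt; omega

lemma gen_charpoly {N : ℕ} (hN : 3 ≤ N) (w w' : ℂ) (x : Fin N → ℂ)
    (hx0 : ∀ k, x k ≠ 0) (hxN : ∀ k, x k ^ N = w) (hww' : w' * w = 1)
    (hinj : Function.Injective x) :
    (genMat N w w').charpoly = ∏ k : Fin N, (X - C (x k + (x k)⁻¹)) := by
  apply charpoly_of_eigen _ x _ hinj
  ext j k
  rw [Matrix.mul_apply, Matrix.mul_diagonal, Matrix.transpose_apply,
    Matrix.vandermonde_apply]
  have h := cycle_eigen hN w w' (x k) (hx0 k) (hxN k) hww' j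
  calc ∑ l, genMat N w w' j l * (Matrix.vandermonde x)ᵀ l k
      = ∑ l : Fin N, genMat N w w' j l * x k ^ (l : ℕ) := by
        apply Finset.sum_congr rfl
        intro l _
        rw [Matrix.transpose_apply, Matrix.vandermonde_apply]
    _ = (x k + (x k)⁻¹) * x k ^ (j : ℕ) := h
    _ = x k ^ (j : ℕ) * (x k + (x k)⁻¹) := mul_comm _ _

lemma prod_even_odd (f : ℕ → ℂ[X]) (n : ℕ) :
    ∏ k ∈ Finset.range (2*n), f k
      = (∏ m ∈ Finset.range n, f (2*m)) * ∏ m ∈ Finset.range n, f (2*m+1) := by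
  induction n with
  | zero => simp
  | succ p ih =>
      rw [show 2*(p+1) = (2*p)+1+1 by ring, Finset.prod_range_succ, Finset.prod_range_succ,
        ih, Finset.prod_range_succ, Finset.prod_range_succ]
      ring

/-- `φ((C_{2n}, −), λ) = (φ(C_n^1, λ))²` for every `n ≥ 3`. -/
theorem charpoly_signed_eq_sq_charpoly_C1 (n : ℕ) (hn : 3 ≤ n) :
    (signedCycleMatC (2 * n)).charpoly = (C1mat n).charpoly ^ 2 := by
  have hn0 : (n : ℂ) ≠ 0 := Nat.cast_ne_zero.mpr (by omega)
  set μ : ℂ := Complex.exp (2 * (Real.pi : ℂ) * Complex.I / ((4 * n : ℕ) : ℂ)) with hμdef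
  have hprim : IsPrimitiveRoot μ (4 * n) := Complex.isPrimitiveRoot_exp (4 * n) (by omega)
  have hμ0 : μ ≠ 0 := Complex.exp_ne_zero _
  have hμ4n : μ ^ (4 * n) = 1 := hprim.pow_eq_one
  have hμ2n : μ ^ (2 * n) = -1 := by
    rw [hμdef, ← Complex.exp_nat_mul]
    rw [show ((2 * n : ℕ) : ℂ) * (2 * (Real.pi : ℂ) * Complex.I / ((4 * n : ℕ) : ℂ))
        = (Real.pi : ℂ) * Complex.I by push_cast; field_simp; ring]
    exact Complex.exp_pi_mul_I
  have hμn : μ ^ n = Complex.I := by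
    rw [hμdef, ← Complex.exp_nat_mul]
    rw [show ((n : ℕ) : ℂ) * (2 * (Real.pi : ℂ) * Complex.I / ((4 * n : ℕ) : ℂ))
        = ((Real.pi / 2 : ℝ) : ℂ) * Complex.I by push_cast; field_simp; ring]
    rw [Complex.exp_mul_I, ← Complex.ofReal_cos, ← Complex.ofReal_sin,
      Real.cos_pi_div_two, Real.sin_pi_div_two]
    simp
  -- the common factor function
  set g : ℕ → ℂ[X] := fun j => X - C (μ ^ j + (μ ^ j)⁻¹) with hgdef
  have gsymm : ∀ j : ℕ, j ≤ 4 * n → g (4 * n - j) = g j := by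
    intro j hj
    have h1 : μ ^ (4 * n - j) * μ ^ j = 1 := by
      rw [← pow_add, show 4 * n - j + j = 4 * n by omega, hμ4n]
    have h2 : μ ^ (4 * n - j) = (μ ^ j)⁻¹ := eq_inv_of_mul_eq_one_left h1
    simp only [hgdef, h2, inv_inv]
    rw [add_comm]
  -- charpoly of the signed cycle
  have hA : (signedCycleMatC (2 * n)).charpoly
      = ∏ k : Fin (2 * n), g (2 * (k : ℕ) + 1) := by
    rw [signed_eq_gen]
    refine gen_charpoly (by omega) (-1) (-1) (fun k => μ ^ (2 * (k : ℕ) + 1))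
      (fun k => pow_ne_zero _ hμ0) ?_ (by norm_num) ?_
    · intro k
      rw [← pow_mul, show (2 * (k : ℕ) + 1) * (2 * n) = (2 * n) * (2 * (k : ℕ) + 1) by ring,
        pow_mul, hμ2n]
      exact Odd.neg_one_pow ⟨(k : ℕ), by ring⟩
    · intro k k' h
      have := hprim.pow_inj (i := 2 * (k : ℕ) + 1) (j := 2 * (k' : ℕ) + 1)
        (by have := k.isLt; omega) (by have := k'.isLt; omega) h
      exact Fin.ext (by omega)
  have hB : (C1mat n).charpoly = ∏ m : Fin n, g (4 * (m : ℕ) + 1) := by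
    rw [C1_eq_gen]
    refine gen_charpoly (by omega) Complex.I (-Complex.I) (fun m => μ ^ (4 * (m : ℕ) + 1))
      (fun m => pow_ne_zero _ hμ0) ?_ (by simp [Complex.I_mul_I]) ?_
    · intro m
      rw [← pow_mul, show (4 * (m : ℕ) + 1) * n = n * (4 * (m : ℕ) + 1) by ring,
        pow_mul, hμn, pow_succ, pow_mul, Complex.I_pow_four, one_pow, one_mul]
    · intro m m' h
      have := hprim.pow_inj (i := 4 * (m : ℕ) + 1) (j := 4 * (m' : ℕ) + 1)
        (by have := m.isLt; omega) (by have := m'.isLt; omega) h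
      exact Fin.ext (by omega)
  rw [hA, hB]
  rw [Fin.prod_univ_eq_prod_range (fun k => g (2 * k + 1)) (2 * n),
    Fin.prod_univ_eq_prod_range (fun m => g (4 * m + 1)) n,
    prod_even_odd (fun k => g (2 * k + 1)) n]
  have heven : ∀ m : ℕ, g (2 * (2 * m) + 1) = g (4 * m + 1) := by
    intro m; congr 1; ring
  have hodd : ∏ m ∈ Finset.range n, g (2 * (2 * m + 1) + 1)
      = ∏ m ∈ Finset.range n, g (4 * m + 1) := by
    calc ∏ m ∈ Finset.range n, g (2 * (2 * m + 1) + 1)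
        = ∏ m ∈ Finset.range n, g (4 * (n - 1 - m) + 1) := by
          apply Finset.prod_congr rfl
          intro m hm
          have hmn : m < n := Finset.mem_range.mp hm
          rw [show 4 * (n - 1 - m) + 1 = 4 * n - (4 * m + 3) by omega,
            gsymm (4 * m + 3) (by omega)]
          congr 1; ring
      _ = ∏ m ∈ Finset.range n, g (4 * m + 1) :=
          Finset.prod_range_reflect (fun m => g (4 * m + 1)) n
  have h1 : ∏ m ∈ Finset.range n, g (2 * (2 * m) + 1)
      = ∏ m ∈ Finset.range n, g (4 * m + 1) :=
    Finset.prod_congr rfl (fun m _ => heven m)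
  rw [sq, h1, hodd]
end

section
/- For all integers n ≥ 1 and 0 ≤ k < n, the number of k-matchings of the disjoint union of two n-cycles equals the number of k-matchings of a single 2n-cycle; equivalently, ∑_{j=0}^{k} [n/(n−j)·C(n−j, j)] · [n/(n−(k−j))·C(n−(k−j), k−j)] = (2n/(2n−k))·C(2n−k, k). -/
open Polynomial
noncomputable def Mc : Matrix (Fin 2) (Fin 2) (Polynomial ℚ) := !![X, 1; 1, 0]
noncomputable def L (n : ℕ) : Polynomial ℚ := (Mc ^ n).trace

lemma trace_sq (A : Matrix (Fin 2) (Fin 2) (Polynomial ℚ)) :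
    (A * A).trace = A.trace ^ 2 - 2 * A.det := by
  simp [Matrix.trace, Matrix.det_fin_two, Fin.sum_univ_two, Matrix.mul_apply]
  ring

lemma detMc : Mc.det = -1 := by simp [Mc, Matrix.det_fin_two]

lemma L_two_mul (n : ℕ) : L (2 * n) = L n ^ 2 - 2 * (-1 : Polynomial ℚ) ^ n := by
  have : Mc ^ (2 * n) = Mc ^ n * Mc ^ n := by rw [two_mul, pow_add]
  rw [L, this, trace_sq, Matrix.det_pow, detMc, L]

lemma Mc_sq : Mc ^ 2 = (X : Polynomial ℚ) • Mc + 1 := by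
  ext i j
  fin_cases i <;> fin_cases j <;>
    simp [Mc, pow_two, Matrix.mul_apply, Fin.sum_univ_two, Matrix.one_apply]

lemma L_rec (n : ℕ) : L (n + 2) = X * L (n + 1) + L n := by
  have h : Mc ^ (n + 2) = (X : Polynomial ℚ) • Mc ^ (n + 1) + Mc ^ n := by
    rw [pow_add, Mc_sq, mul_add, mul_one, mul_smul_comm, ← pow_succ]
  rw [L, h, Matrix.trace_add, Matrix.trace_smul, L, L, smul_eq_mul]

lemma L_zero : L 0 = 2 := by
  simp [L, Matrix.trace, Fin.sum_univ_two]

lemma L_one : L 1 = X := by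
  simp [L, Mc, Matrix.trace, Fin.sum_univ_two]

def g : ℕ → ℕ → ℕ
  | 0, i => if i = 0 then 2 else 0
  | 1, i => if i = 1 then 1 else 0
  | n+2, 0 => g n 0
  | n+2, i+1 => g (n+1) i + g n (i+1)

def f (n j : ℕ) : ℕ :=
  if j = 0 then 1 else Nat.choose (n - j) j + Nat.choose (n - j - 1) (j - 1)

lemma g_eq_zero : ∀ n i, n < i → g n i = 0 := by
  intro n
  induction n using Nat.strong_induction_on with
  | _ n ih =>
    match n with
    | 0 => intro i h; simp [g]; omega
    | 1 => intro i h; simp [g]; omega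
    | n+2 =>
      intro i h
      match i with
      | 0 => omega
      | i+1 =>
        show g (n+1) i + g n (i+1) = 0
        rw [ih (n+1) (by omega) i (by omega), ih n (by omega) (i+1) (by omega)]

lemma g_parity : ∀ n i, (n + i) % 2 = 1 → g n i = 0 := by
  intro n
  induction n using Nat.strong_induction_on with
  | _ n ih =>
    match n with
    | 0 => intro i h; simp [g]; omega
    | 1 => intro i h; simp [g]; omega
    | n+2 =>
      intro i h
      match i with
      | 0 =>
        show g n 0 = 0
        exact ih n (by omega) 0 (by omega)
      | i+1 =>
        show g (n+1) i + g n (i+1) = 0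
        rw [ih (n+1) (by omega) i (by omega), ih n (by omega) (i+1) (by omega)]

lemma f_two_mul (j : ℕ) (hj : 1 ≤ j) : f (2 * j) j = 2 := by
  have h1 : 2 * j - j = j := by omega
  rw [f, if_neg (by omega : ¬ j = 0), h1, Nat.choose_self, Nat.choose_self]

lemma f_rec (n j : ℕ) (h : 2 * (j + 1) ≤ n + 1) :
    f (n + 2) (j + 1) = f (n + 1) (j + 1) + f n j := by
  match j with
  | 0 =>
    have e1 : n + 2 - 1 = n + 1 := by omega
    have e2 : n + 1 - 1 = n := by omega
    simp [f, e1, e2, Nat.choose_one_right]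
  | m+1 =>
    have h' : 2 * (m + 2) ≤ n + 1 := h
    obtain ⟨a, ha'⟩ : ∃ a, n + 1 = 2 * (m + 2) + a := ⟨n + 1 - 2 * (m + 2), by omega⟩
    have e1 : n + 2 - (m + 1 + 1) = m + a + 3 := by omega
    have e3 : n + 1 - (m + 1 + 1) = m + a + 2 := by omega
    have e5 : m + 1 + 1 - 1 = m + 1 := rfl
    have e6 : n - (m + 1) = m + a + 2 := by omega
    have e8 : m + a + 3 - 1 = m + a + 2 := by omega
    have e9 : m + a + 2 - 1 = m + a + 1 := by omega
    have e10 : m + 1 - 1 = m := rfl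
    simp only [f, if_neg (Nat.succ_ne_zero (m + 1)), if_neg (Nat.succ_ne_zero m),
      e1, e3, e5, e6, e8, e9, e10]
    have p1 : (m + a + 3).choose (m + 1 + 1) =
        (m + a + 2).choose (m + 1) + (m + a + 2).choose (m + 1 + 1) := by
      rw [(by omega : m + a + 3 = (m + a + 2) + 1)]; exact Nat.choose_succ_succ _ _
    have p2 : (m + a + 2).choose (m + 1) = (m + a + 1).choose m + (m + a + 1).choose (m + 1) := by
      rw [(by omega : m + a + 2 = (m + a + 1) + 1)]; exact Nat.choose_succ_succ _ _
    omega

lemma g_eq_f : ∀ n, 1 ≤ n → ∀ i j, i + 2 * j = n → g n i = f n j := by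
  intro n
  induction n using Nat.strong_induction_on with
  | _ n ih =>
    match n with
    | 0 => omega
    | 1 =>
      intro _ i j hij
      obtain ⟨hi, hj⟩ : i = 1 ∧ j = 0 := by omega
      subst hi; subst hj; decide
    | 2 =>
      intro _ i j hij
      rcases (by omega : i = 2 ∧ j = 0 ∨ i = 0 ∧ j = 1) with ⟨hi, hj⟩ | ⟨hi, hj⟩ <;>
        (subst hi; subst hj; decide)
    | n+3 =>
      intro _ i j hij
      match i with
      | 0 =>
        have hj2 : 2 ≤ j := by omega
        have hg : g (n+3) 0 = g (n+1) 0 := rfl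
        have h1 : g (n+1) 0 = f (n+1) (j-1) := ih (n+1) (by omega) (by omega) 0 (j-1) (by omega)
        rw [hg, h1, (by omega : n+1 = 2*(j-1)), (by omega : n+3 = 2*j),
          f_two_mul (j-1) (by omega), f_two_mul j (by omega)]
      | i+1 =>
        have hg : g (n+3) (i+1) = g (n+2) i + g (n+1) (i+1) := rfl
        match j with
        | 0 =>
          have h1 : g (n+2) i = f (n+2) 0 := ih (n+2) (by omega) (by omega) i 0 (by omega)
          have h2 : g (n+1) (i+1) = 0 := g_eq_zero (n+1) (i+1) (by omega)
          rw [hg, h1, h2]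
          simp [f]
        | jj+1 =>
          have h1 : g (n+2) i = f (n+2) (jj+1) := ih (n+2) (by omega) (by omega) i (jj+1) (by omega)
          have h2 : g (n+1) (i+1) = f (n+1) jj := ih (n+1) (by omega) (by omega) (i+1) jj (by omega)
          rw [hg, h1, h2, f_rec (n+1) jj (by omega)]

lemma coeff_L : ∀ n i, (L n).coeff i = (g n i : ℚ) := by
  intro n
  induction n using Nat.strong_induction_on with
  | _ n ih =>
    match n with
    | 0 =>
      intro i
      rw [L_zero]
      match i with
      | 0 => simp [g]
      | i+1 => simp [g, Polynomial.coeff_ofNat_succ]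
    | 1 =>
      intro i
      rw [L_one]
      match i with
      | 0 => simp [g]
      | 1 => simp [g]
      | i+2 => rw [Polynomial.coeff_X]; simp [g]
    | n+2 =>
      intro i
      rw [L_rec, Polynomial.coeff_add]
      match i with
      | 0 =>
        rw [Polynomial.mul_coeff_zero, Polynomial.coeff_X_zero, zero_mul, zero_add,
          ih n (by omega) 0]
        rfl
      | i+1 =>
        rw [Polynomial.coeff_X_mul, ih (n+1) (by omega) i, ih n (by omega) (i+1)]
        have : g (n+2) (i+1) = g (n+1) i + g n (i+1) := rfl
        rw [this]
        push_cast
        ring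

lemma f_zero (n j : ℕ) (h1 : j < n) (h2 : n < 2 * j) : f n j = 0 := by
  rw [f, if_neg (by omega : ¬ j = 0),
    Nat.choose_eq_zero_of_lt (by omega), Nat.choose_eq_zero_of_lt (by omega)]

lemma claimA (m j : ℕ) (h : j < m) :
    (m : ℚ) / (m - j) * (Nat.choose (m - j) j : ℚ) = (f m j : ℚ) := by
  have hmj : (m : ℚ) - j ≠ 0 := by
    have : (j : ℚ) < m := by exact_mod_cast h
    intro hc; rw [sub_eq_zero] at hc; exact absurd hc (ne_of_gt this)
  have hnat : f m j * (m - j) = m * Nat.choose (m - j) j := by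
    rcases Nat.eq_zero_or_pos j with hj | hj
    · subst hj; simp [f, Nat.mul_comm]
    · have h5 := Nat.add_one_mul_choose_eq (m - j - 1) (j - 1)
      rw [(by omega : m - j - 1 + 1 = m - j), (by omega : j - 1 + 1 = j)] at h5
      have key : Nat.choose (m - j - 1) (j - 1) * (m - j) = Nat.choose (m - j) j * j := by
        rw [Nat.mul_comm]; exact h5
      rw [f, if_neg (by omega : ¬ j = 0), Nat.add_mul, key, ← Nat.mul_add,
        (by omega : m - j + j = m), Nat.mul_comm]
  rw [div_mul_eq_mul_div, div_eq_iff hmj]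
  have hc := congrArg (Nat.cast : ℕ → ℚ) hnat
  push_cast [Nat.cast_sub h.le] at hc
  linarith

lemma sum_g_eq_sum_f (n k : ℕ) (hn : 1 ≤ n) (hk : k < n) :
    ∑ i ∈ Finset.range (2 * n - 2 * k + 1), g n i * g n (2 * n - 2 * k - i)
      = ∑ j ∈ Finset.range (k + 1), f n j * f n (k - j) := by
  apply Finset.sum_bij_ne_zero (fun i _ _ => (n - i) / 2)
  · intro a h₁ h₂
    rw [Finset.mem_range] at h₁ ⊢
    obtain ⟨hga, hgd⟩ := Nat.mul_ne_zero_iff.mp h₂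
    have ha1 : ¬ n < a := fun h => hga (g_eq_zero n a h)
    have hpar : ¬ (n + a) % 2 = 1 := fun h => hga (g_parity n a h)
    have hd : ¬ n < 2 * n - 2 * k - a := fun h => hgd (g_eq_zero n _ h)
    omega
  · intro a₁ h₁₁ h₁₂ a₂ h₂₁ h₂₂ he
    obtain ⟨hga1, _⟩ := Nat.mul_ne_zero_iff.mp h₁₂
    obtain ⟨hga2, _⟩ := Nat.mul_ne_zero_iff.mp h₂₂
    have ha1 : ¬ n < a₁ := fun h => hga1 (g_eq_zero n a₁ h)
    have hpar1 : ¬ (n + a₁) % 2 = 1 := fun h => hga1 (g_parity n a₁ h)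
    have ha2 : ¬ n < a₂ := fun h => hga2 (g_eq_zero n a₂ h)
    have hpar2 : ¬ (n + a₂) % 2 = 1 := fun h => hga2 (g_parity n a₂ h)
    omega
  · intro b hb hfb
    rw [Finset.mem_range] at hb
    obtain ⟨hfb1, hfb2⟩ := Nat.mul_ne_zero_iff.mp hfb
    have h2b : ¬ n < 2 * b := fun h => hfb1 (f_zero n b (by omega) h)
    have h2kb : ¬ n < 2 * (k - b) := fun h => hfb2 (f_zero n (k - b) (by omega) h)
    refine ⟨n - 2 * b, by rw [Finset.mem_range]; omega, ?_, by omega⟩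
    have e1 : g n (n - 2 * b) = f n b := g_eq_f n hn _ b (by omega)
    have e2 : g n (2 * n - 2 * k - (n - 2 * b)) = f n (k - b) :=
      g_eq_f n hn _ (k - b) (by omega)
    rw [e1, e2]
    exact hfb
  · intro a h₁ h₂
    rw [Finset.mem_range] at h₁
    obtain ⟨hga, hgd⟩ := Nat.mul_ne_zero_iff.mp h₂
    have ha1 : ¬ n < a := fun h => hga (g_eq_zero n a h)
    have hpar : ¬ (n + a) % 2 = 1 := fun h => hga (g_parity n a h)
    have hd : ¬ n < 2 * n - 2 * k - a := fun h => hgd (g_eq_zero n _ h)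
    have e1 : g n a = f n ((n - a) / 2) := g_eq_f n hn a _ (by omega)
    have e2 : g n (2 * n - 2 * k - a) = f n (k - (n - a) / 2) :=
      g_eq_f n hn _ _ (by omega)
    rw [e1, e2]



/-- The number of `k`-matchings of two disjoint `n`-cycles equals the number of
`k`-matchings of `C_{2n}`, expressed via the matching counts of cycles:
`∑_{j=0}^{k} (n/(n−j))·C(n−j,j) · (n/(n−(k−j)))·C(n−(k−j),k−j) = (2n/(2n−k))·C(2n−k,k)`
for `k < n`. -/
theorem matchings_two_cycles_eq_matchings_big_cycle (n k : ℕ) (hn : 1 ≤ n) (hk : k < n) :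
    (∑ j ∈ Finset.range (k + 1),
        ((n : ℚ) / (n - j) * (Nat.choose (n - j) j : ℚ)) *
          ((n : ℚ) / (n - (k - j)) * (Nat.choose (n - (k - j)) (k - j) : ℚ))) =
      (2 * n : ℚ) / (2 * n - k) * (Nat.choose (2 * n - k) k : ℚ) := by
  have hstep1 : ∀ j ∈ Finset.range (k + 1),
      ((n : ℚ) / (n - j) * (Nat.choose (n - j) j : ℚ)) *
          ((n : ℚ) / (n - (k - j)) * (Nat.choose (n - (k - j)) (k - j) : ℚ))
        = (f n j : ℚ) * (f n (k - j) : ℚ) := by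
    intro j hj
    rw [Finset.mem_range] at hj
    have h2' := claimA n (k - j) (by omega)
    rw [Nat.cast_sub (by omega : j ≤ k)] at h2'
    rw [claimA n j (by omega), h2']
  have hr : (2 * n : ℚ) / (2 * n - k) * (Nat.choose (2 * n - k) k : ℚ) = (f (2 * n) k : ℚ) := by
    have h := claimA (2 * n) k (by omega)
    push_cast at h ⊢
    exact h
  rw [Finset.sum_congr rfl hstep1, hr]
  set d := 2 * n - 2 * k with hd
  have h1 : (f (2 * n) k : ℚ) = (L (2 * n)).coeff d := by
    rw [coeff_L, g_eq_f (2 * n) (by omega) d k (by omega)]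
  have h2 : (L (2 * n)).coeff d = (L n ^ 2).coeff d := by
    rw [L_two_mul, Polynomial.coeff_sub]
    have hc : ((2 : Polynomial ℚ) * (-1) ^ n) = Polynomial.C (2 * (-1) ^ n) := by
      simp [map_mul, map_pow, map_ofNat]
    rw [hc, Polynomial.coeff_C, if_neg (by omega : ¬ d = 0)]
    ring
  have h3 : (L n ^ 2).coeff d = ∑ i ∈ Finset.range (d + 1), (g n i : ℚ) * (g n (d - i) : ℚ) := by
    rw [pow_two, Polynomial.coeff_mul, Finset.Nat.sum_antidiagonal_eq_sum_range_succ_mk]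
    exact Finset.sum_congr rfl (fun i _ => by rw [coeff_L, coeff_L])
  have h4 := sum_g_eq_sum_f n k hn hk
  calc ∑ j ∈ Finset.range (k + 1), (f n j : ℚ) * (f n (k - j) : ℚ)
      = ((∑ j ∈ Finset.range (k + 1), f n j * f n (k - j) : ℕ) : ℚ) := by push_cast; rfl
    _ = ((∑ i ∈ Finset.range (d + 1), g n i * g n (d - i) : ℕ) : ℚ) := by rw [h4]
    _ = ∑ i ∈ Finset.range (d + 1), (g n i : ℚ) * (g n (d - i) : ℚ) := by push_cast; rfl
    _ = (L n ^ 2).coeff d := h3.symm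
    _ = (L (2 * n)).coeff d := h2.symm
    _ = (f (2 * n) k : ℚ) := h1.symm
end

section
/- For every integer n ≥ 3, the multiset {2·cos((2k+1)π/(2n)) : k = 0, …, 2n−1} (the spectrum of C_{2n}^2) equals the multiset obtained by taking {2·cos((2k+1)π/(2n)) : k = 0, …, n−1} with each element counted twice (the spectrum of the disjoint union of two copies of C_n^1). Hence C_{2n}^2 is cospectral with C_n^1 ∪ C_n^1. -/
/-- The spectrum of `C_{2n}^2` equals the spectrum of the disjoint union of two
copies of `C_n^1` (each value of the latter counted twice), for every `n ≥ 3`. -/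
theorem spectrum_C2n2_eq_two_copies_Cn1 (n : ℕ) (hn : 3 ≤ n) :
    (Finset.range (2 * n)).val.map
        (fun k => 2 * Real.cos ((2 * k + 1) * Real.pi / (2 * n))) =
      (Finset.range n).val.map
          (fun k => 2 * Real.cos ((2 * k + 1) * Real.pi / (2 * n))) +
        (Finset.range n).val.map
          (fun k => 2 * Real.cos ((2 * k + 1) * Real.pi / (2 * n))) := by
  have hn0 : (0:ℝ) < n := by positivity
  rw [Finset.range_val, Finset.range_val, Nat.two_mul, Multiset.range_add]
  simp only [Multiset.bind_def, Multiset.pure_def, Multiset.bind_singleton,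
    Multiset.add_bind, Multiset.map_add, Multiset.map_map]
  congr 1
  refine Multiset.map_eq_map_of_bij_of_nodup _ _ (Multiset.nodup_range n)
    (Multiset.nodup_range n) (fun a _ => n - 1 - a)
    (fun a ha => ?_) (fun a₁ h₁ a₂ h₂ h => ?_) (fun b hb => ?_) (fun a ha => ?_)
  · simp only [Multiset.mem_range] at *; omega
  · have h1 := Multiset.mem_range.mp h₁
    have h2 := Multiset.mem_range.mp h₂
    have h' : n - 1 - a₁ = n - 1 - a₂ := h
    omega
  · simp only [Multiset.mem_range] at *
    exact ⟨n - 1 - b, by omega, by omega⟩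
  · have hk : a < n := Multiset.mem_range.mp ha
    have hm : ((n - 1 - a : ℕ) : ℝ) = (n:ℝ) - 1 - a := by
      have h : (n - 1 - a) + a + 1 = n := by omega
      have := congrArg (Nat.cast : ℕ → ℝ) h
      push_cast at this
      linarith
    simp only [Function.comp]
    push_cast [hm]
    have e1 : (2*((n:ℝ)+a)+1)*Real.pi/(2*n) = (2*a+1)*Real.pi/(2*n) + Real.pi := by
      field_simp; ring
    have e2 : (2*((n:ℝ)-1-a)+1)*Real.pi/(2*n) = Real.pi - (2*a+1)*Real.pi/(2*n) := by
      field_simp; ring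
    rw [e1, e2, Real.cos_add_pi, Real.cos_pi_sub]
end

section
/- For every integer k ≥ 1, the multiset {2·cos(jπ/(4k+2)) : j = 1, …, 4k+1} (the spectrum of the path P_{4k+1}) equals the union of the multisets {2·cos(jπ/(2k+1)) : j = 1, …, 2k} (the spectrum of P_{2k}) and {2·cos((2j+1)π/(4k+2)) : j = 0, …, 2k} (the spectrum of C_{2k+1}^1). Hence P_{4k+1} is cospectral with the disjoint union P_{2k} ∪ C_{2k+1}^1, so paths of order ≡ 1 (mod 4) are not determined by their Hermitian spectrum. -/
lemma index_split (k : ℕ) :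
    (Finset.Icc 1 (4 * k + 1)).val =
      ((Finset.Icc 1 (2 * k)).val.map (fun i => 2 * i)) +
        ((Finset.range (2 * k + 1)).val.map (fun j => 2 * j + 1)) := by
  have hn1 : ((Finset.Icc 1 (4 * k + 1)).val).Nodup := (Finset.Icc 1 (4 * k + 1)).nodup
  have hn2 : (((Finset.Icc 1 (2 * k)).val.map (fun i => 2 * i)) +
      ((Finset.range (2 * k + 1)).val.map (fun j => 2 * j + 1))).Nodup := by
    rw [Multiset.nodup_add]
    refine ⟨Multiset.Nodup.map (fun a b h => by omega) (Finset.Icc 1 (2 * k)).nodup,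
      Multiset.Nodup.map (fun a b h => by omega) (Finset.range (2 * k + 1)).nodup, ?_⟩
    rw [Multiset.disjoint_left]
    intro a ha hb
    simp only [Multiset.mem_map, Finset.mem_Icc, Finset.mem_range] at ha hb
    obtain ⟨b, _, hb1⟩ := ha
    obtain ⟨c, _, hc1⟩ := hb
    omega
  rw [hn1.ext hn2]
  intro a
  simp only [Multiset.mem_add, Multiset.mem_map, Finset.mem_val, Finset.mem_Icc,
    Finset.mem_range]
  constructor
  · rintro ⟨h1, h2⟩
    rcases Nat.even_or_odd a with ⟨b, hb⟩ | ⟨b, hb⟩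
    · exact Or.inl ⟨b, by omega, by omega⟩
    · exact Or.inr ⟨b, by omega, by omega⟩
  · rintro (⟨b, hb, rfl⟩ | ⟨b, hb, rfl⟩) <;> omega

/-- The spectrum of `P_{4k+1}` equals the multiset union of the spectrum of `P_{2k}`
and the Hermitian spectrum of the mixed cycle `C_{2k+1}^1`, for every `k ≥ 1`.
Hence `P_{4k+1}` is cospectral with `P_{2k} ∪ C_{2k+1}^1` and not DHS. -/
theorem spectrum_P4k1_eq_P2k_union_C2k1 (k : ℕ) (hk : 1 ≤ k) :
    (Finset.Icc 1 (4 * k + 1)).val.map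
        (fun j => 2 * Real.cos (j * Real.pi / (4 * k + 2))) =
      (Finset.Icc 1 (2 * k)).val.map
          (fun j => 2 * Real.cos (j * Real.pi / (2 * k + 1))) +
        (Finset.range (2 * k + 1)).val.map
          (fun j => 2 * Real.cos ((2 * j + 1) * Real.pi / (4 * k + 2))) := by
  simp only [Multiset.pure_def, Multiset.bind_def, Multiset.bind_singleton, Multiset.map_map]
  rw [index_split k, Multiset.map_add, Multiset.map_map, Multiset.map_map]
  congr 1
  · apply Multiset.map_congr rfl
    intro i _
    have h : ((2 * k + 1 : ℕ) : ℝ) ≠ 0 := by positivity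
    simp only [Function.comp_apply]
    push_cast
    congr 1
    congr 1
    have h2 : (2 * (k : ℝ) + 1) ≠ 0 := by positivity
    have h4 : (4 * (k : ℝ) + 2) ≠ 0 := by positivity
    field_simp
    ring
  · apply Multiset.map_congr rfl
    intro j _
    simp only [Function.comp_apply]
    push_cast
    ring
end

section
/- Any mixed graph whose underlying graph is a forest is switching equivalent to the forest itself (i.e., its Hermitian adjacency matrix is conjugate, via a diagonal matrix with entries in {±1, ±i}, to the ordinary adjacency matrix of the underlying forest). Consequently, all mixed graphs with the same underlying forest have the same Hermitian spectrum, equal to the spectrum of the forest. -/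
open SimpleGraph

namespace MixedForestAux

variable {V : Type*} {G : SimpleGraph V}

/-- Weight of a walk: product of `H`-entries along its edges. -/
def wWeight (H : Matrix V V ℂ) : ∀ {u v : V}, G.Walk u v → ℂ
  | _, _, .nil => 1
  | u, _, .cons (v := x) _ p => H u x * wWeight H p

@[simp] lemma wWeight_nil (H : Matrix V V ℂ) {u : V} :
    wWeight H (Walk.nil : G.Walk u u) = 1 := rfl

lemma wWeight_cons (H : Matrix V V ℂ) {u x v : V} (h : G.Adj u x) (p : G.Walk x v) :
    wWeight H (Walk.cons h p) = H u x * wWeight H p := rfl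

lemma wWeight_append (H : Matrix V V ℂ) {u v w : V} (p : G.Walk u v) (q : G.Walk v w) :
    wWeight H (p.append q) = wWeight H p * wWeight H q := by
  induction p with
  | nil => simp
  | cons h p ih => simp only [Walk.cons_append, wWeight_cons, ih, mul_assoc]

lemma wWeight_copy (H : Matrix V V ℂ) {u v u' v' : V} (p : G.Walk u v)
    (hu : u = u') (hv : v = v') :
    wWeight H (p.copy hu hv) = wWeight H p := by
  subst hu; subst hv; simp [Walk.copy_rfl_rfl]

lemma wWeight_bypass [DecidableEq V] (hG : G.IsAcyclic) (H : Matrix V V ℂ)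
    (hunit : ∀ ⦃a b : V⦄, G.Adj a b → H a b * H b a = 1) :
    ∀ {u v : V} (p : G.Walk u v), wWeight H p.bypass = wWeight H p := by
  intro u v p
  induction p with
  | nil => simp [Walk.bypass]
  | @cons u x v h p ih =>
    simp only [Walk.bypass]
    split_ifs with hs
    · 
      have hspec := Walk.take_spec p.bypass hs
      have htake : p.bypass.takeUntil u hs = Walk.cons h.symm Walk.nil := by
        have h1 : p.bypass.IsPath := Walk.bypass_isPath p
        have h2 : (p.bypass.takeUntil u hs).IsPath := h1.takeUntil hs
        have heq := hG.path_unique ⟨p.bypass.takeUntil u hs, h2⟩ (Path.singleton h.symm)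
        simpa [Path.singleton] using congrArg Subtype.val heq
      calc wWeight H (p.bypass.dropUntil u hs)
          = (H u x * H x u) * wWeight H (p.bypass.dropUntil u hs) := by
            rw [hunit h, one_mul]
        _ = H u x * (wWeight H (p.bypass.takeUntil u hs)
              * wWeight H (p.bypass.dropUntil u hs)) := by
            rw [htake, wWeight_cons]; simp [mul_assoc]
        _ = H u x * wWeight H p.bypass := by rw [← wWeight_append, hspec]
        _ = wWeight H (Walk.cons h p) := by rw [ih, wWeight_cons]
    · rw [wWeight_cons, wWeight_cons, ih]

lemma wWeight_eq [DecidableEq V] (hG : G.IsAcyclic) (H : Matrix V V ℂ)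
    (hunit : ∀ ⦃a b : V⦄, G.Adj a b → H a b * H b a = 1)
    {u v : V} (p q : G.Walk u v) :
    wWeight H p = wWeight H q := by
  rw [← wWeight_bypass hG H hunit p, ← wWeight_bypass hG H hunit q]
  have heq := hG.path_unique ⟨p.bypass, p.bypass_isPath⟩ ⟨q.bypass, q.bypass_isPath⟩
  rw [Subtype.mk.injEq] at heq
  rw [heq]

lemma wWeight_pow4 (H : Matrix V V ℂ)
    (h4 : ∀ ⦃a b : V⦄, G.Adj a b → (H a b) ^ 4 = 1)
    {u v : V} (p : G.Walk u v) : (wWeight H p) ^ 4 = 1 := by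
  induction p with
  | nil => simp
  | cons h p ih => rw [wWeight_cons, mul_pow, ih, h4 h, mul_one]

lemma mem_of_pow4 (z : ℂ) (h : z ^ 4 = 1) :
    z ∈ ({1, -1, Complex.I, -Complex.I} : Set ℂ) := by
  simp only [Set.mem_insert_iff, Set.mem_singleton_iff]
  have h2 : (z ^ 2 - 1) * (z ^ 2 + 1) = 0 := by linear_combination h
  rcases mul_eq_zero.mp h2 with h' | h'
  · have hz : (z - 1) * (z + 1) = 0 := by linear_combination h'
    rcases mul_eq_zero.mp hz with h'' | h''
    · left; linear_combination h''
    · right; left; linear_combination h''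
  · have hz : (z - Complex.I) * (z + Complex.I) = 0 := by
      linear_combination h' - Complex.I_sq
    rcases mul_eq_zero.mp hz with h'' | h''
    · right; right; left; linear_combination h''
    · right; right; right; linear_combination h''

end MixedForestAux

open MixedForestAux

/-- A mixed graph whose underlying graph is a forest is switching equivalent to the
forest itself: if `H` is the Hermitian adjacency matrix of a mixed graph whose
underlying graph `G` is acyclic (entries in `{1, i, −i}` on edges of `G`, zero
elsewhere), then there is a diagonal matrix `D` with diagonal entries in
`{1, −1, i, −i}` such that `H = D⁻¹ · A(G) · D`. -/
theorem mixed_forest_switching_equivalent {V : Type*} [Fintype V] [DecidableEq V]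
    (G : SimpleGraph V) [DecidableRel G.Adj] (hG : G.IsAcyclic)
    (H : Matrix V V ℂ) (hHerm : H.IsHermitian)
    (hedge : ∀ i j, G.Adj i j → H i j ∈ ({1, Complex.I, -Complex.I} : Set ℂ))
    (hzero : ∀ i j, ¬ G.Adj i j → H i j = 0) :
    ∃ d : V → ℂ, (∀ i, d i ∈ ({1, -1, Complex.I, -Complex.I} : Set ℂ)) ∧
      H = (Matrix.diagonal d)⁻¹ * G.adjMatrix ℂ * Matrix.diagonal d := by
  classical
  have hunit : ∀ ⦃a b : V⦄, G.Adj a b → H a b * H b a = 1 := by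
    intro a b hab
    have hba : H b a = star (H a b) := (hHerm.apply b a).symm
    rcases hedge a b hab with h | h | h <;>
      rw [hba, h] <;> simp [Complex.I_mul_I]
  have h4 : ∀ ⦃a b : V⦄, G.Adj a b → (H a b) ^ 4 = 1 := by
    intro a b hab
    rcases hedge a b hab with h | h | h <;> rw [h] <;>
      norm_num [pow_succ, Complex.I_mul_I]
  -- choose a representative of each connected component
  let rep : V → V := fun v => Classical.choose (Quot.exists_rep (G.connectedComponentMk v))
  have hrepmk : ∀ v, G.connectedComponentMk (rep v) = G.connectedComponentMk v := fun v =>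
    Classical.choose_spec (Quot.exists_rep (G.connectedComponentMk v))
  have hreach : ∀ v, G.Reachable (rep v) v := fun v =>
    SimpleGraph.ConnectedComponent.exact (hrepmk v)
  set d : V → ℂ := fun v => wWeight H (hreach v).some with hd
  have hd4 : ∀ v, (d v) ^ 4 = 1 := fun v => wWeight_pow4 H h4 _
  have hd0 : ∀ v, d v ≠ 0 := by
    intro v hv
    have := hd4 v
    rw [hv] at this
    norm_num at this
  refine ⟨d, fun v => mem_of_pow4 _ (hd4 v), ?_⟩
  have hdiag : (Matrix.diagonal d)⁻¹ = Matrix.diagonal (fun v => (d v)⁻¹) := by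
    have hri : Ring.inverse d = fun v => (d v)⁻¹ := by
      have hu : Ring.inverse (↑(⟨d, fun v => (d v)⁻¹,
          funext fun v => mul_inv_cancel₀ (hd0 v),
          funext fun v => inv_mul_cancel₀ (hd0 v)⟩ : (V → ℂ)ˣ) : V → ℂ)
          = ((⟨d, fun v => (d v)⁻¹,
          funext fun v => mul_inv_cancel₀ (hd0 v),
          funext fun v => inv_mul_cancel₀ (hd0 v)⟩ : (V → ℂ)ˣ)⁻¹ : (V → ℂ)ˣ) :=
        Ring.inverse_unit _
      exact hu
    rw [Matrix.inv_diagonal, hri]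
  rw [hdiag]
  ext i j
  rw [Matrix.mul_diagonal, Matrix.diagonal_mul, SimpleGraph.adjMatrix_apply]
  by_cases hadj : G.Adj i j
  · have hrep : rep i = rep j := by
      have hcc : G.connectedComponentMk i = G.connectedComponentMk j :=
        SimpleGraph.ConnectedComponent.sound hadj.reachable
      simp only [rep, hcc]
    have hdj : d j = d i * H i j := by
      have := wWeight_eq hG H hunit (hreach j).some
        ((((hreach i).some).append (Walk.cons hadj Walk.nil)).copy hrep rfl)
      rw [wWeight_copy, wWeight_append, wWeight_cons, wWeight_nil, mul_one] at this
      exact this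
    rw [if_pos hadj, hdj]
    field_simp [hd0 i]
  · rw [hzero i j hadj, if_neg hadj]
    ring
end
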